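/- Let Φ and Ψ be a pair of complementary N-functions with 1 < a_Φ ≤ b_Φ < ∞, and set φ(t) = 1/Ψ⁻¹(1/t). Then for every measurable f on [0,∞) there is a constant C (depending only on Φ) such that sup_{t>0} (1/φ(t))∫₀^t f*(s) ds ≤ C · sup_{t>0} f*(t)/Φ⁻¹(1/t), i.e., the Marcinkiewicz norm ‖f‖_{M_φ} is dominated by the weak Orlicz quasi-norm ‖f‖_{Φ,∞}. -/

import Mathlib

open MeasureTheory Filter Set

/-- An N-function: even, convex, vanishing exactly at 0, sublinear at 0 and superlinear at ∞. -/
structure IsNFunction (Φ : ℝ → ℝ) : Prop where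
  even : ∀ t, Φ (-t) = Φ t
  nonneg : ∀ t, 0 ≤ Φ t
  convex : ConvexOn ℝ Set.univ Φ
  zero : Φ 0 = 0
  pos : ∀ t : ℝ, t ≠ 0 → 0 < Φ t
  tendsto_zero : Tendsto (fun t => Φ t / t) (nhdsWithin 0 (Set.Ioi 0)) (nhds 0)
  tendsto_top : Tendsto (fun t => Φ t / t) atTop atTop

/-- Left derivative. -/
noncomputable def leftDeriv (f : ℝ → ℝ) (t : ℝ) : ℝ := derivWithin f (Set.Iio t) t

/-- Left inverse ψ(s) = inf { t > 0 : φ t > s }. -/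
noncomputable def leftInv (φ : ℝ → ℝ) (s : ℝ) : ℝ := sInf {t : ℝ | 0 < t ∧ s < φ t}

/-- The complementary N-function Ψ(s) = ∫₀^{|s|} ψ(v) dv. -/
noncomputable def complementaryFn (Φ : ℝ → ℝ) (s : ℝ) : ℝ :=
  ∫ v in (0:ℝ)..|s|, leftInv (leftDeriv Φ) v

/-- The inverse of Φ restricted to [0,∞). -/
noncomputable def invFn (Φ : ℝ → ℝ) (t : ℝ) : ℝ := sInf {s : ℝ | 0 ≤ s ∧ t ≤ Φ s}

/-- The Δ₂-condition. -/
def DeltaTwo (Φ : ℝ → ℝ) : Prop := ∃ K > (2:ℝ), ∀ t ≥ (0:ℝ), Φ (2 * t) ≤ K * Φ t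

/-- The ∇₂-condition. -/
def NablaTwo (Φ : ℝ → ℝ) : Prop := ∃ c > (1:ℝ), ∀ t ≥ (0:ℝ), Φ t ≤ (1 / (2 * c)) * Φ (c * t)

/-- a_Φ = inf_{t>0} t Φ'(t) / Φ(t), as an extended nonnegative real. -/
noncomputable def aPhi (Φ : ℝ → ℝ) : ENNReal :=
  ⨅ t : {t : ℝ // 0 < t}, ENNReal.ofReal ((t : ℝ) * leftDeriv Φ t / Φ t)

/-- b_Φ = sup_{t>0} t Φ'(t) / Φ(t), as an extended nonnegative real. -/
noncomputable def bPhi (Φ : ℝ → ℝ) : ENNReal :=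
  ⨆ t : {t : ℝ // 0 < t}, ENNReal.ofReal ((t : ℝ) * leftDeriv Φ t / Φ t)

/-- Distribution function λ_s(f) = μ{ω ∈ [0,∞) : |f ω| > s}. -/
noncomputable def distrib (f : ℝ → ℝ) (s : ℝ) : ENNReal :=
  volume {ω : ℝ | 0 ≤ ω ∧ s < |f ω|}

/-- Decreasing rearrangement f*(t) = inf { s > 0 : λ_s(f) ≤ t }. -/
noncomputable def rearr (f : ℝ → ℝ) (t : ℝ) : ℝ :=
  sInf {s : ℝ | 0 < s ∧ distrib f s ≤ ENNReal.ofReal t}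

/-- Weak Orlicz quasi-norm. -/
noncomputable def weakNorm (Φ : ℝ → ℝ) (f : ℝ → ℝ) : ℝ :=
  sInf {c : ℝ | 0 < c ∧ ∀ t > (0:ℝ), t * Φ (rearr f t / c) ≤ 1}

/-- Orlicz norm via the rearrangement. -/
noncomputable def orliczNorm (Φ : ℝ → ℝ) (f : ℝ → ℝ) : ℝ :=
  sInf {c : ℝ | 0 < c ∧ (∫ t in Set.Ioi (0:ℝ), Φ (rearr f t / c)) ≤ 1}

section Aux

variable {Φ : ℝ → ℝ}

theorem IsNFunction.mono (hΦ : IsNFunction Φ) : MonotoneOn Φ (Set.Ici 0) := by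
  rintro s hs t ht hst
  rcases eq_or_lt_of_le hst with rfl | h
  · exact le_rfl
  have ht0 : 0 < t := lt_of_le_of_lt hs h
  have hst1 : s / t ≤ 1 := (div_le_one ht0).mpr hst
  have h1 := hΦ.convex.2 (Set.mem_univ (0:ℝ)) (Set.mem_univ t)
    (show (0:ℝ) ≤ 1 - s / t by linarith) (div_nonneg hs ht0.le)
    (show (1 - s / t) + s / t = 1 by ring)
  have h2 : (1 - s / t) • (0:ℝ) + (s / t) • t = s := by
    rw [smul_zero, zero_add, smul_eq_mul, div_mul_cancel₀ s ht0.ne']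
  rw [h2] at h1
  have h3 : Φ s ≤ (s / t) * Φ t := by
    simpa [hΦ.zero, smul_eq_mul] using h1
  have h4 : (s / t) * Φ t ≤ 1 * Φ t :=
    mul_le_mul_of_nonneg_right hst1 (hΦ.nonneg t)
  linarith

theorem IsNFunction.cont (hΦ : IsNFunction Φ) : Continuous Φ := by
  have := ConvexOn.continuousOn isOpen_univ hΦ.convex
  rw [← continuousOn_univ]
  exact this

theorem IsNFunction.bddAbove_slope (hΦ : IsNFunction Φ) (t : ℝ) :
    BddAbove (slope Φ t '' Set.Iio t) := by
  refine ⟨slope Φ t (t + 1), ?_⟩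
  rintro y ⟨x, hx, rfl⟩
  simp only [slope_def_field]
  exact hΦ.convex.secant_mono (Set.mem_univ t) (Set.mem_univ x) (Set.mem_univ (t+1))
    (ne_of_lt hx) (by linarith) (by linarith [Set.mem_Iio.mp hx])

theorem IsNFunction.hasLeftDeriv (hΦ : IsNFunction Φ) (t : ℝ) :
    HasDerivWithinAt Φ (sSup (slope Φ t '' Set.Iio t)) (Set.Iio t) t := by
  rw [hasDerivWithinAt_iff_tendsto_slope' (by simp : t ∉ Set.Iio t)]
  refine MonotoneOn.tendsto_nhdsLT ?_ (hΦ.bddAbove_slope t)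
  intro x hx y hy hxy
  simp only [slope_def_field]
  exact hΦ.convex.secant_mono (Set.mem_univ t) (Set.mem_univ x) (Set.mem_univ y)
    (ne_of_lt hx) (ne_of_lt hy) hxy

theorem IsNFunction.leftDeriv_eq (hΦ : IsNFunction Φ) (t : ℝ) :
    leftDeriv Φ t = sSup (slope Φ t '' Set.Iio t) :=
  (hΦ.hasLeftDeriv t).derivWithin (uniqueDiffWithinAt_Iio t)

theorem IsNFunction.slope_le_leftDeriv (hΦ : IsNFunction Φ) {s t : ℝ} (h : s < t) :
    (Φ t - Φ s) / (t - s) ≤ leftDeriv Φ t := by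
  rw [hΦ.leftDeriv_eq t]
  have : slope Φ t s = (Φ t - Φ s) / (t - s) := by
    rw [slope_def_field, ← neg_div_neg_eq]; ring_nf
  rw [← this]
  exact le_csSup (hΦ.bddAbove_slope t) ⟨s, h, rfl⟩

theorem IsNFunction.leftDeriv_le_slope (hΦ : IsNFunction Φ) {s t : ℝ} (h : s < t) :
    leftDeriv Φ s ≤ (Φ t - Φ s) / (t - s) := by
  rw [hΦ.leftDeriv_eq s]
  refine csSup_le ⟨slope Φ s (s - 1), ⟨s - 1, by simp, rfl⟩⟩ ?_
  rintro y ⟨x, hx, rfl⟩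
  have : slope Φ s t = (Φ t - Φ s) / (t - s) := slope_def_field Φ s t
  rw [← this]
  simp only [slope_def_field]
  exact hΦ.convex.secant_mono (Set.mem_univ s) (Set.mem_univ x) (Set.mem_univ t)
    (ne_of_lt hx) (ne_of_gt h) (le_of_lt (lt_trans hx h))

theorem IsNFunction.leftDeriv_mono (hΦ : IsNFunction Φ) {s t : ℝ} (h : s < t) :
    leftDeriv Φ s ≤ leftDeriv Φ t :=
  le_trans (hΦ.leftDeriv_le_slope h) (hΦ.slope_le_leftDeriv h)

theorem IsNFunction.div_le_leftDeriv (hΦ : IsNFunction Φ) {t : ℝ} (ht : 0 < t) :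
    Φ t / t ≤ leftDeriv Φ t := by
  have := hΦ.slope_le_leftDeriv ht
  simpa [hΦ.zero] using this

theorem IsNFunction.exists_leftDeriv_gt (hΦ : IsNFunction Φ) (v : ℝ) :
    ∃ t : ℝ, 0 < t ∧ v < leftDeriv Φ t := by
  obtain ⟨t, hv, ht⟩ := ((hΦ.tendsto_top.eventually_gt_atTop v).and (eventually_gt_atTop 0)).exists
  exact ⟨t, ht, lt_of_lt_of_le hv (hΦ.div_le_leftDeriv ht)⟩

theorem leftInv_nonneg (g : ℝ → ℝ) (v : ℝ) : 0 ≤ leftInv g v :=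
  Real.sInf_nonneg (fun _ ht => ht.1.le)

theorem IsNFunction.leftInv_set_nonempty (hΦ : IsNFunction Φ) (v : ℝ) :
    {t : ℝ | 0 < t ∧ v < leftDeriv Φ t}.Nonempty := by
  obtain ⟨t, ht, hv⟩ := hΦ.exists_leftDeriv_gt v
  exact ⟨t, ht, hv⟩

theorem IsNFunction.leftInv_mono (hΦ : IsNFunction Φ) :
    Monotone (leftInv (leftDeriv Φ)) := by
  intro v w hvw
  refine csInf_le_csInf ⟨0, fun t ht => ht.1.le⟩ (hΦ.leftInv_set_nonempty w) ?_
  rintro t ⟨ht, hw⟩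
  exact ⟨ht, lt_of_le_of_lt hvw hw⟩

theorem IsNFunction.le_leftInv (hΦ : IsNFunction Φ) {v s : ℝ}
    (h : leftDeriv Φ s ≤ v) : s ≤ leftInv (leftDeriv Φ) v := by
  refine le_csInf (hΦ.leftInv_set_nonempty v) ?_
  rintro t ⟨ht, hvt⟩
  by_contra hc
  push_neg at hc
  exact absurd hvt (not_lt.mpr ((hΦ.leftDeriv_mono hc).trans h))

theorem invFn_nonneg (F : ℝ → ℝ) (u : ℝ) : 0 ≤ invFn F u :=
  Real.sInf_nonneg (fun _ hs => hs.1)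

theorem invFn_le {F : ℝ → ℝ} {u y : ℝ} (hy : 0 ≤ y) (h : u ≤ F y) : invFn F u ≤ y :=
  csInf_le ⟨0, fun _ hs => hs.1⟩ ⟨hy, h⟩

theorem IsNFunction.invFn_set_nonempty (hΦ : IsNFunction Φ) (u : ℝ) :
    {s : ℝ | 0 ≤ s ∧ u ≤ Φ s}.Nonempty := by
  obtain ⟨t, h1, h2⟩ :=
    ((hΦ.tendsto_top.eventually_ge_atTop (max u 0)).and (eventually_ge_atTop 1)).exists
  have ht0 : (0:ℝ) < t := lt_of_lt_of_le one_pos h2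
  refine ⟨t, ht0.le, ?_⟩
  rw [le_div_iff₀ ht0] at h1
  have h4 : max u 0 * 1 ≤ max u 0 * t := mul_le_mul_of_nonneg_left h2 (le_max_right u 0)
  calc u ≤ max u 0 := le_max_left u 0
    _ = max u 0 * 1 := (mul_one _).symm
    _ ≤ max u 0 * t := h4
    _ ≤ Φ t := h1

theorem IsNFunction.invFn_pos (hΦ : IsNFunction Φ) {u : ℝ} (hu : 0 < u) :
    0 < invFn Φ u := by
  have hev : ∀ᶠ s in nhds (0:ℝ), Φ s < u := by
    have h0 : Tendsto Φ (nhds 0) (nhds 0) := by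
      have := hΦ.cont.continuousAt (x := (0:ℝ))
      rwa [ContinuousAt, hΦ.zero] at this
    exact h0.eventually_lt_const hu
  obtain ⟨ε, hε, hball⟩ := Metric.eventually_nhds_iff.mp hev
  refine lt_of_lt_of_le hε (le_csInf (hΦ.invFn_set_nonempty u) ?_)
  rintro s ⟨hs0, hsu⟩
  by_contra hc
  push_neg at hc
  have : Φ s < u := hball (by rw [Real.dist_eq, sub_zero, abs_of_nonneg hs0]; exact hc)
  exact absurd hsu (not_le.mpr this)

theorem IsNFunction.apply_invFn (hΦ : IsNFunction Φ) {u : ℝ} (hu : 0 ≤ u) :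
    Φ (invFn Φ u) = u := by
  have hcl : IsClosed {s : ℝ | 0 ≤ s ∧ u ≤ Φ s} := by
    have : {s : ℝ | 0 ≤ s ∧ u ≤ Φ s} = Set.Ici 0 ∩ {s : ℝ | u ≤ Φ s} := rfl
    rw [this]
    exact isClosed_Ici.inter (isClosed_le continuous_const hΦ.cont)
  have hbdd : BddBelow {s : ℝ | 0 ≤ s ∧ u ≤ Φ s} := ⟨0, fun _ hs => hs.1⟩
  have hmem := hcl.csInf_mem (hΦ.invFn_set_nonempty u) hbdd
  obtain ⟨hx0, hxu⟩ := hmem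
  obtain ⟨y, hy, hyeq⟩ := intermediate_value_Icc (le_trans hx0 le_rfl : (0:ℝ) ≤ _)
    hΦ.cont.continuousOn ⟨by rw [hΦ.zero]; exact hu, hxu⟩
  have h1 : invFn Φ u ≤ y := csInf_le hbdd ⟨hy.1, hyeq.ge⟩
  have h2 : y = invFn Φ u := le_antisymm hy.2 h1
  rw [← h2]; exact hyeq

theorem IsNFunction.aPhi_ne_top (hΦ : IsNFunction Φ) : aPhi Φ ≠ ⊤ :=
  ne_top_of_le_ne_top ENNReal.ofReal_ne_top (iInf_le _ ⟨1, one_pos⟩)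

theorem IsNFunction.growth (hΦ : IsNFunction Φ) (ha : 1 < aPhi Φ) :
    ∃ a : ℝ, 1 < a ∧ ∀ t : ℝ, 0 < t → a * Φ t ≤ t * leftDeriv Φ t := by
  refine ⟨(aPhi Φ).toReal, ?_, ?_⟩
  · have := (ENNReal.toReal_lt_toReal ENNReal.one_ne_top hΦ.aPhi_ne_top).mpr ha
    simpa using this
  · intro t ht
    have ha0 : 0 < (aPhi Φ).toReal := by
      have := (ENNReal.toReal_lt_toReal ENNReal.one_ne_top hΦ.aPhi_ne_top).mpr ha
      simp at this; linarith
    have h1 : ENNReal.ofReal ((aPhi Φ).toReal)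
        ≤ ENNReal.ofReal (t * leftDeriv Φ t / Φ t) := by
      rw [ENNReal.ofReal_toReal hΦ.aPhi_ne_top]
      exact iInf_le (fun x : {t : ℝ // 0 < t} =>
        ENNReal.ofReal ((x : ℝ) * leftDeriv Φ (x : ℝ) / Φ (x : ℝ))) ⟨t, ht⟩
    have h2 : (aPhi Φ).toReal ≤ t * leftDeriv Φ t / Φ t := by
      by_contra hcon
      push_neg at hcon
      exact absurd h1 (not_le.mpr ((ENNReal.ofReal_lt_ofReal_iff ha0).mpr hcon))
    have hΦt : 0 < Φ t := hΦ.pos t ht.ne'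
    exact (le_div_iff₀ hΦt).mp h2

theorem IsNFunction.doubling (hΦ : IsNFunction Φ) {a : ℝ}
    (hgrow : ∀ t : ℝ, 0 < t → a * Φ t ≤ t * leftDeriv Φ t) {s : ℝ} (hs : 0 < s) :
    (1 + a) * Φ s ≤ Φ (2 * s) := by
  have h1 : leftDeriv Φ s ≤ (Φ (2 * s) - Φ s) / (2 * s - s) :=
    hΦ.leftDeriv_le_slope (by linarith)
  have h2 : 2 * s - s = s := by ring
  rw [h2] at h1
  have h3 : s * leftDeriv Φ s ≤ Φ (2 * s) - Φ s := by
    have := mul_le_mul_of_nonneg_left h1 hs.le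
    rwa [mul_div_cancel₀ _ hs.ne'] at this
  have h4 := hgrow s hs
  linarith

theorem IsNFunction.pow_growth (hΦ : IsNFunction Φ) {a : ℝ} (ha : 0 ≤ a)
    (hgrow : ∀ t : ℝ, 0 < t → a * Φ t ≤ t * leftDeriv Φ t) {x : ℝ} (hx : 0 < x) :
    ∀ n : ℕ, (1 + a) ^ n * Φ x ≤ Φ (2 ^ n * x) := by
  intro n
  induction n with
  | zero => simp
  | succ n ih =>
    have hs : (0:ℝ) < 2 ^ n * x := by positivity
    have h1 := hΦ.doubling hgrow hs
    calc (1 + a) ^ (n + 1) * Φ x = (1 + a) * ((1 + a) ^ n * Φ x) := by ring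
      _ ≤ (1 + a) * Φ (2 ^ n * x) := mul_le_mul_of_nonneg_left ih (by linarith)
      _ ≤ Φ (2 * (2 ^ n * x)) := h1
      _ = Φ (2 ^ (n + 1) * x) := by ring_nf

theorem IsNFunction.scale_growth (hΦ : IsNFunction Φ) {a : ℝ} (ha : 1 < a)
    (hgrow : ∀ t : ℝ, 0 < t → a * Φ t ≤ t * leftDeriv Φ t) {l x : ℝ}
    (hl : 1 ≤ l) (hx : 0 < x) :
    (l / 2) ^ Real.logb 2 (1 + a) * Φ x ≤ Φ (l * x) := by
  set p := Real.logb 2 (1 + a) with hp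
  have ha1 : (0:ℝ) < 1 + a := by linarith
  have hl0 : (0:ℝ) < l := by linarith
  have hp0 : 0 ≤ p := Real.logb_nonneg one_lt_two (by linarith)
  set n := Nat.floor (Real.logb 2 l) with hn
  have hlogb0 : 0 ≤ Real.logb 2 l := Real.logb_nonneg one_lt_two hl
  have h2n : (2:ℝ) ^ n ≤ l := by
    have h1 : (n : ℝ) ≤ Real.logb 2 l := Nat.floor_le hlogb0
    calc (2:ℝ) ^ n = (2:ℝ) ^ (n : ℝ) := (Real.rpow_natCast 2 n).symm
      _ ≤ (2:ℝ) ^ Real.logb 2 l := Real.rpow_le_rpow_of_exponent_le one_le_two h1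
      _ = l := Real.rpow_logb two_pos (by norm_num) hl0
  have hl2 : l / 2 ≤ 2 ^ n := by
    have h1 : Real.logb 2 l < n + 1 := Nat.lt_floor_add_one _
    have h2 : l < (2:ℝ) ^ ((n : ℝ) + 1) := by
      calc l = (2:ℝ) ^ Real.logb 2 l := (Real.rpow_logb two_pos (by norm_num) hl0).symm
        _ < (2:ℝ) ^ ((n : ℝ) + 1) := by
          apply Real.rpow_lt_rpow_of_exponent_lt one_lt_two
          exact_mod_cast h1
    have h3 : (2:ℝ) ^ ((n : ℝ) + 1) = 2 * 2 ^ n := by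
      rw [Real.rpow_add two_pos, Real.rpow_one, Real.rpow_natCast]; ring
    rw [h3] at h2
    linarith
  have hmain : (2:ℝ) ^ p = 1 + a := Real.rpow_logb two_pos (by norm_num) ha1
  have hpow : ((2:ℝ) ^ n) ^ p = (1 + a) ^ n := by
    rw [← Real.rpow_natCast 2 n, ← Real.rpow_mul (by norm_num), mul_comm,
      Real.rpow_mul (by norm_num), hmain, Real.rpow_natCast]
  have h4 : (l / 2) ^ p ≤ (1 + a) ^ n := by
    rw [← hpow]
    exact Real.rpow_le_rpow (by positivity) hl2 hp0
  have h5 := hΦ.pow_growth (by linarith : (0:ℝ) ≤ a) hgrow hx n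
  have h6 : Φ ((2:ℝ) ^ n * x) ≤ Φ (l * x) := by
    apply hΦ.mono (Set.mem_Ici.mpr (by positivity)) (Set.mem_Ici.mpr (by positivity))
    exact mul_le_mul_of_nonneg_right h2n hx.le
  calc (l / 2) ^ p * Φ x ≤ (1 + a) ^ n * Φ x :=
        mul_le_mul_of_nonneg_right h4 (hΦ.nonneg x)
    _ ≤ Φ ((2:ℝ) ^ n * x) := h5
    _ ≤ Φ (l * x) := h6

theorem IsNFunction.invFn_growth (hΦ : IsNFunction Φ) {a : ℝ} (ha : 1 < a)
    (hgrow : ∀ t : ℝ, 0 < t → a * Φ t ≤ t * leftDeriv Φ t) {v w : ℝ}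
    (hw : 0 < w) (hvw : w ≤ v) :
    invFn Φ v ≤ 2 * (v / w) ^ (Real.logb 2 (1 + a))⁻¹ * invFn Φ w := by
  set p := Real.logb 2 (1 + a) with hpdef
  have hp1 : 1 < p := by
    have := Real.logb_lt_logb one_lt_two two_pos (by linarith : (2:ℝ) < 1 + a)
    rwa [Real.logb_self_eq_one one_lt_two] at this
  have hp0 : p ≠ 0 := by linarith
  have hvw0 : 1 ≤ v / w := (one_le_div hw).mpr hvw
  have hx : 0 < invFn Φ w := hΦ.invFn_pos hw
  have hΦx : Φ (invFn Φ w) = w := hΦ.apply_invFn hw.le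
  set l := 2 * (v / w) ^ p⁻¹ with hldef
  have hrp1 : 1 ≤ (v / w) ^ p⁻¹ := by
    calc (1:ℝ) = 1 ^ p⁻¹ := (Real.one_rpow _).symm
      _ ≤ (v / w) ^ p⁻¹ := Real.rpow_le_rpow zero_le_one hvw0 (by positivity)
  have hl1 : 1 ≤ l := by rw [hldef]; linarith
  have hkey : v ≤ Φ (l * invFn Φ w) := by
    have h1 := hΦ.scale_growth ha hgrow hl1 hx
    have h2 : (l / 2) ^ p = v / w := by
      rw [hldef]
      have : 2 * (v / w) ^ p⁻¹ / 2 = (v / w) ^ p⁻¹ := by ring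
      rw [this, ← Real.rpow_mul (by positivity), inv_mul_cancel₀ hp0, Real.rpow_one]
    rw [h2, hΦx] at h1
    rwa [div_mul_cancel₀ _ hw.ne'] at h1
  calc invFn Φ v ≤ l * invFn Φ w := invFn_le (by positivity) hkey
    _ = 2 * (v / w) ^ p⁻¹ * invFn Φ w := by rw [hldef]

theorem IsNFunction.young (hΦ : IsNFunction Φ) {u : ℝ} (hu : 0 < u) :
    invFn (complementaryFn Φ) u * invFn Φ u ≤ 4 * u := by
  set x := invFn Φ u with hxdef
  have hx : 0 < x := hΦ.invFn_pos hu
  have hΦx : Φ x = u := hΦ.apply_invFn hu.le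
  set ψ := leftInv (leftDeriv Φ) with hψdef
  -- left derivative bound at x/2
  have hφ2 : leftDeriv Φ (x / 2) ≤ 2 * u / x := by
    have h1 : leftDeriv Φ (x / 2) ≤ (Φ x - Φ (x / 2)) / (x - x / 2) :=
      hΦ.leftDeriv_le_slope (by linarith)
    have h2 : x - x / 2 = x / 2 := by ring
    rw [h2] at h1
    have h3 : (Φ x - Φ (x / 2)) / (x / 2) ≤ Φ x / (x / 2) :=
      div_le_div_of_nonneg_right (by linarith [hΦ.nonneg (x / 2)]) (by linarith)
    have h4 : Φ x / (x / 2) = 2 * u / x := by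
      rw [hΦx]; field_simp
    linarith
  have hψ_ge : ∀ v : ℝ, 2 * u / x ≤ v → x / 2 ≤ ψ v := by
    intro v hv
    exact hΦ.le_leftInv (le_trans hφ2 hv)
  have hψ_int : ∀ c d : ℝ, IntervalIntegrable ψ volume c d :=
    fun c d => ((hΦ.leftInv_mono).monotoneOn _).intervalIntegrable
  have hab : 2 * u / x ≤ 4 * u / x := by gcongr; linarith
  have ha0 : (0:ℝ) ≤ 2 * u / x := by positivity
  have hsplit : (∫ v in (0:ℝ)..(4 * u / x), ψ v)
      = (∫ v in (0:ℝ)..(2 * u / x), ψ v) + ∫ v in (2 * u / x)..(4 * u / x), ψ v :=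
    (intervalIntegral.integral_add_adjacent_intervals (hψ_int _ _) (hψ_int _ _)).symm
  have h1 : (0:ℝ) ≤ ∫ v in (0:ℝ)..(2 * u / x), ψ v :=
    intervalIntegral.integral_nonneg ha0 (fun v _ => leftInv_nonneg _ v)
  have h2 : u ≤ ∫ v in (2 * u / x)..(4 * u / x), ψ v := by
    have hconst : (∫ _ in (2 * u / x)..(4 * u / x), (x / 2 : ℝ))
        = (4 * u / x - 2 * u / x) * (x / 2) := by
      rw [intervalIntegral.integral_const]; simp [smul_eq_mul]
    have hmono : (∫ _ in (2 * u / x)..(4 * u / x), (x / 2 : ℝ))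
        ≤ ∫ v in (2 * u / x)..(4 * u / x), ψ v :=
      intervalIntegral.integral_mono_on hab intervalIntegrable_const (hψ_int _ _)
        (fun v hv => hψ_ge v hv.1)
    have hval : (4 * u / x - 2 * u / x) * (x / 2) = u := by
      field_simp; ring
    rw [hconst, hval] at hmono
    exact hmono
  have hΨval : u ≤ complementaryFn Φ (4 * u / x) := by
    rw [complementaryFn, abs_of_nonneg (by positivity : (0:ℝ) ≤ 4 * u / x)]
    rw [← hψdef, hsplit]
    linarith
  have h3 : invFn (complementaryFn Φ) u ≤ 4 * u / x :=
    invFn_le (by positivity) hΨval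
  calc invFn (complementaryFn Φ) u * x ≤ (4 * u / x) * x :=
        mul_le_mul_of_nonneg_right h3 hx.le
    _ = 4 * u := by field_simp

theorem rearr_nonneg (f : ℝ → ℝ) (t : ℝ) : 0 ≤ rearr f t :=
  Real.sInf_nonneg (fun _ hs => hs.1.le)

end Aux

theorem marcinkiewicz_le_weakOrlicz (Φ : ℝ → ℝ) (hΦ : IsNFunction Φ)
    (hΨ : IsNFunction (complementaryFn Φ))
    (ha : 1 < aPhi Φ) (hb : bPhi Φ < ⊤) :
    ∃ C : ENNReal, 0 < C ∧ C < ⊤ ∧ ∀ f : ℝ → ℝ, Measurable f →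
      (⨆ t : {t : ℝ // 0 < t},
        ENNReal.ofReal (invFn (complementaryFn Φ) (1 / (t : ℝ)) *
          ∫ s in (0:ℝ)..(t : ℝ), rearr f s)) ≤
      C * ⨆ t : {t : ℝ // 0 < t},
        ENNReal.ofReal (rearr f t / invFn Φ (1 / (t : ℝ))) := by
  obtain ⟨a, ha1, hgrow⟩ := hΦ.growth ha
  set p := Real.logb 2 (1 + a) with hpdef
  have hp1 : 1 < p := by
    have := Real.logb_lt_logb one_lt_two two_pos (by linarith : (2:ℝ) < 1 + a)
    rwa [Real.logb_self_eq_one one_lt_two] at this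
  have hq : 0 < 1 - p⁻¹ := by
    have : p⁻¹ < 1 := inv_lt_one_of_one_lt₀ hp1
    linarith
  set c₀ : ℝ := 8 / (1 - p⁻¹) with hc₀def
  have hc₀ : 0 < c₀ := by positivity
  refine ⟨ENNReal.ofReal c₀, ENNReal.ofReal_pos.mpr hc₀, ENNReal.ofReal_lt_top, ?_⟩
  intro f hf
  set A := ⨆ t : {t : ℝ // 0 < t},
      ENNReal.ofReal (rearr f t / invFn Φ (1 / (t : ℝ))) with hAdef
  rcases eq_or_ne A ⊤ with hA | hA
  · rw [hA, ENNReal.mul_top (ENNReal.ofReal_pos.mpr hc₀).ne']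
    exact le_top
  set M := A.toReal with hMdef
  have hM0 : 0 ≤ M := ENNReal.toReal_nonneg
  have hMbound : ∀ s : ℝ, 0 < s → rearr f s ≤ M * invFn Φ (1 / s) := by
    intro s hs
    have hinv : 0 < invFn Φ (1 / s) := hΦ.invFn_pos (by positivity)
    have h1 : ENNReal.ofReal (rearr f s / invFn Φ (1 / s)) ≤ A :=
      le_iSup (fun t : {t : ℝ // 0 < t} =>
        ENNReal.ofReal (rearr f t / invFn Φ (1 / (t : ℝ)))) ⟨s, hs⟩
    have h2 : rearr f s / invFn Φ (1 / s) ≤ M := by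
      have := ENNReal.toReal_mono hA h1
      rwa [ENNReal.toReal_ofReal (div_nonneg (rearr_nonneg f s) hinv.le)] at this
    exact (div_le_iff₀ hinv).mp h2
  apply iSup_le
  rintro ⟨t, ht⟩
  have htinv : (0:ℝ) < 1 / t := by positivity
  set xt := invFn Φ (1 / t) with hxtdef
  have hxt : 0 < xt := hΦ.invFn_pos htinv
  set yt := invFn (complementaryFn Φ) (1 / t) with hytdef
  have hyt : 0 ≤ yt := invFn_nonneg _ _
  have hyoung : yt * xt ≤ 4 * (1 / t) := hΦ.young htinv
  have key : yt * (∫ s in (0:ℝ)..t, rearr f s) ≤ c₀ * M := by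
    by_cases hint : IntervalIntegrable (rearr f) volume 0 t
    · -- dominating function
      set c : ℝ := 2 * M * xt * t ^ p⁻¹ with hcdef
      have hc_nonneg : 0 ≤ c := by positivity
      have hptw : ∀ s ∈ Set.Ioc (0:ℝ) t, rearr f s ≤ c * s ^ (-p⁻¹) := by
        rintro s ⟨hs0, hst⟩
        have h1 : rearr f s ≤ M * invFn Φ (1 / s) := hMbound s hs0
        have hwle : (1:ℝ) / t ≤ 1 / s := one_div_le_one_div_of_le hs0 hst
        have h2 : invFn Φ (1 / s) ≤ 2 * ((1 / s) / (1 / t)) ^ p⁻¹ * xt :=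
          hΦ.invFn_growth ha1 hgrow htinv hwle
        have h3 : (1 / s) / (1 / t) = t / s := by field_simp
        have h4 : (t / s) ^ p⁻¹ = t ^ p⁻¹ * s ^ (-p⁻¹) := by
          rw [Real.div_rpow ht.le hs0.le, Real.rpow_neg hs0.le, div_eq_mul_inv]
        have h5 : invFn Φ (1 / s) ≤ 2 * (t ^ p⁻¹ * s ^ (-p⁻¹)) * xt := by
          rw [h3, h4] at h2; exact h2
        calc rearr f s ≤ M * invFn Φ (1 / s) := h1
          _ ≤ M * (2 * (t ^ p⁻¹ * s ^ (-p⁻¹)) * xt) :=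
            mul_le_mul_of_nonneg_left h5 hM0
          _ = c * s ^ (-p⁻¹) := by rw [hcdef]; ring
      have hg_int : IntervalIntegrable (fun s : ℝ => c * s ^ (-p⁻¹)) volume 0 t :=
        (intervalIntegral.intervalIntegrable_rpow' (by linarith : (-1:ℝ) < -p⁻¹)).const_mul c
      have hI : (∫ s in (0:ℝ)..t, rearr f s) ≤ ∫ s in (0:ℝ)..t, c * s ^ (-p⁻¹) := by
        rw [intervalIntegral.integral_of_le ht.le, intervalIntegral.integral_of_le ht.le]
        exact setIntegral_mono_on
          ((intervalIntegrable_iff_integrableOn_Ioc_of_le ht.le).mp hint)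
          ((intervalIntegrable_iff_integrableOn_Ioc_of_le ht.le).mp hg_int)
          measurableSet_Ioc hptw
      have hJ : (∫ s in (0:ℝ)..t, c * s ^ (-p⁻¹)) = c * (t ^ (1 - p⁻¹) / (1 - p⁻¹)) := by
        rw [intervalIntegral.integral_const_mul, integral_rpow (Or.inl (by linarith))]
        rw [Real.zero_rpow (ne_of_gt (by linarith) : -p⁻¹ + 1 ≠ (0:ℝ))]
        rw [show -p⁻¹ + 1 = 1 - p⁻¹ from by ring]
        ring
      have hIval : (∫ s in (0:ℝ)..t, rearr f s) ≤ 2 * M * xt * t / (1 - p⁻¹) := by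
        have hpow : t ^ p⁻¹ * t ^ (1 - p⁻¹) = t := by
          rw [← Real.rpow_add ht, add_sub_cancel, Real.rpow_one]
        calc (∫ s in (0:ℝ)..t, rearr f s) ≤ c * (t ^ (1 - p⁻¹) / (1 - p⁻¹)) :=
              hJ ▸ hI
          _ = 2 * M * xt * (t ^ p⁻¹ * t ^ (1 - p⁻¹)) / (1 - p⁻¹) := by
              rw [hcdef]; ring
          _ = 2 * M * xt * t / (1 - p⁻¹) := by rw [hpow]
      have hInn : 0 ≤ (∫ s in (0:ℝ)..t, rearr f s) :=
        intervalIntegral.integral_nonneg ht.le (fun s _ => rearr_nonneg f s)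
      calc yt * (∫ s in (0:ℝ)..t, rearr f s)
          ≤ yt * (2 * M * xt * t / (1 - p⁻¹)) :=
            mul_le_mul_of_nonneg_left hIval hyt
        _ = (2 * M * t / (1 - p⁻¹)) * (yt * xt) := by ring
        _ ≤ (2 * M * t / (1 - p⁻¹)) * (4 * (1 / t)) := by
            apply mul_le_mul_of_nonneg_left hyoung
            positivity
        _ = 8 * M / (1 - p⁻¹) * (t * (1 / t)) := by ring
        _ = c₀ * M := by
            rw [mul_one_div, div_self ht.ne', mul_one, hc₀def]
            ring
    · rw [intervalIntegral.integral_undef hint, mul_zero]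
      positivity
  calc ENNReal.ofReal (yt * ∫ s in (0:ℝ)..t, rearr f s)
      ≤ ENNReal.ofReal (c₀ * M) := ENNReal.ofReal_le_ofReal key
    _ = ENNReal.ofReal c₀ * ENNReal.ofReal M := ENNReal.ofReal_mul hc₀.le
    _ = ENNReal.ofReal c₀ * A := by rw [hMdef, ENNReal.ofReal_toReal hA]
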